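/- arXiv:math/0309253 — 2 statements merged into one kernel-verified Lean document; each statement's English description precedes it below -/
import Mathlib

section
/- For any k ≥ 1 and real r with |arg(e^{2πikθ₀})| ≤ π/4 (arguments taken in (−π, π]), one has |r^k e^{2πikθ₀} − 1| ≥ |e^{2πikθ₀} − 1| · cos(arg(e^{2πikθ₀})) ≥ (√2/2)|e^{2πikθ₀} − 1|. -/
open Complex Real Filter

/-! For `‖z‖ = 1` and `c = Re z = cos (arg z)`, the points `t z` with `t` real run along a line
through the origin, so `‖t z - 1‖² = t² - 2 t c + 1 ≥ 1 - c²`. Since `‖z - 1‖² = 2 - 2c`, the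
first inequality reduces to `2 c² ≤ 1 + c`, which holds for `0 ≤ c ≤ 1` (for `c ≤ 0` there is nothing to prove); the second one is
`cos (arg z) ≥ cos (π / 4)`. -/

namespace Complex

theorem sq_norm_ofReal_mul_sub_one (t : ℝ) (z : ℂ) :
    ‖(t : ℂ) * z - 1‖ ^ 2 = t ^ 2 * ‖z‖ ^ 2 - 2 * t * z.re + 1 := by
  rw [Complex.sq_norm, Complex.sq_norm, normSq_sub, normSq_mul, normSq_ofReal]
  simp only [map_one, mul_one, re_ofReal_mul]
  ring

theorem cos_arg_of_norm_eq_one {z : ℂ} (hz : ‖z‖ = 1) : Real.cos z.arg = z.re := by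
  rw [cos_arg (norm_ne_zero_iff.mp (hz ▸ one_ne_zero)), hz, div_one]

theorem norm_sub_one_mul_cos_arg_le {z : ℂ} (hz : ‖z‖ = 1) (t : ℝ) :
    ‖z - 1‖ * Real.cos z.arg ≤ ‖(t : ℂ) * z - 1‖ := by
  rw [cos_arg_of_norm_eq_one hz]
  rcases le_or_gt z.re 0 with hre | hre
  · exact (mul_nonpos_of_nonneg_of_nonpos (norm_nonneg _) hre).trans (norm_nonneg _)
  have h₁ := sq_norm_ofReal_mul_sub_one 1 z
  have h₂ := sq_norm_ofReal_mul_sub_one t z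
  simp only [ofReal_one, one_mul, one_pow, mul_one, hz] at h₁ h₂
  refine pow_le_pow_iff_left₀ (by positivity) (norm_nonneg _) two_ne_zero |>.mp ?_
  rw [mul_pow, h₁, h₂]
  have hgap : 0 ≤ (t - z.re) ^ 2 + (1 - z.re) ^ 2 * (1 + 2 * z.re) := by positivity
  linear_combination hgap

theorem norm_exp_two_pi_I_mul (x : ℝ) : ‖exp (2 * π * I * x)‖ = 1 := by
  rw [← norm_exp_ofReal_mul_I (2 * π * x)]
  push_cast
  ring_nf

end Complex

theorem Real.sqrt_two_div_two_le_cos {x : ℝ} (hx : |x| ≤ π / 4) : √2 / 2 ≤ Real.cos x := by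
  rw [← cos_pi_div_four, ← Real.cos_abs x]
  exact cos_le_cos_of_nonneg_of_le_pi (abs_nonneg x) (by linarith [pi_pos]) hx

theorem stmt1_general (θ₀ r : ℝ) (k : ℕ)
    (harg : |Complex.arg (Complex.exp (2 * π * Complex.I * ((k : ℝ) * θ₀)))| ≤ π / 4) :
    ‖Complex.exp (2 * π * Complex.I * ((k : ℝ) * θ₀)) - 1‖ *
        Real.cos (Complex.arg (Complex.exp (2 * π * Complex.I * ((k : ℝ) * θ₀)))) ≤
      ‖(r : ℂ) ^ k * Complex.exp (2 * π * Complex.I * ((k : ℝ) * θ₀)) - 1‖ ∧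
    Real.sqrt 2 / 2 * ‖Complex.exp (2 * π * Complex.I * ((k : ℝ) * θ₀)) - 1‖ ≤
      ‖Complex.exp (2 * π * Complex.I * ((k : ℝ) * θ₀)) - 1‖ *
        Real.cos (Complex.arg (Complex.exp (2 * π * Complex.I * ((k : ℝ) * θ₀)))) := by
  have hz := norm_exp_two_pi_I_mul ((k : ℝ) * θ₀)
  push_cast at hz
  constructor
  · simpa using norm_sub_one_mul_cos_arg_le hz (r ^ k)
  · rw [mul_comm]
    exact mul_le_mul_of_nonneg_left (Real.sqrt_two_div_two_le_cos harg) (norm_nonneg _)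

/-- For any `k ≥ 1` and real `r > 0` with `|arg(e^{2πikθ₀})| ≤ π/4`
(arguments in `(−π, π]`), one has
`|r^k e^{2πikθ₀} − 1| ≥ |e^{2πikθ₀} − 1| · cos(arg(e^{2πikθ₀})) ≥ (√2/2)|e^{2πikθ₀} − 1|`. -/
theorem stmt1 (θ₀ r : ℝ) (hr : 0 < r) (k : ℕ) (hk : 1 ≤ k)
    (harg : |Complex.arg (Complex.exp (2 * π * Complex.I * ((k : ℝ) * θ₀)))| ≤ π / 4) :
    ‖Complex.exp (2 * π * Complex.I * ((k : ℝ) * θ₀)) - 1‖ *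
        Real.cos (Complex.arg (Complex.exp (2 * π * Complex.I * ((k : ℝ) * θ₀)))) ≤
      ‖(r : ℂ) ^ k * Complex.exp (2 * π * Complex.I * ((k : ℝ) * θ₀)) - 1‖ ∧
    Real.sqrt 2 / 2 * ‖Complex.exp (2 * π * Complex.I * ((k : ℝ) * θ₀)) - 1‖ ≤
      ‖Complex.exp (2 * π * Complex.I * ((k : ℝ) * θ₀)) - 1‖ *
        Real.cos (Complex.arg (Complex.exp (2 * π * Complex.I * ((k : ℝ) * θ₀)))) :=
  stmt1_general θ₀ r k harg
end

section
/- Define sequences of positive reals by η₁ = 1 and η_n = M ∑_{ν ≥ 2, k₁+⋯+k_ν = n, k_i ≥ 1} (ν+1) η_{k₁}⋯η_{k_ν} for n ≥ 2, and δ₁ = 1, δ_n = (1/ε_n) max_{ν ≥ 2, k₁+⋯+k_ν=n, k_i≥1} δ_{k₁}⋯δ_{k_ν}, where ε_n > 0. Define σ₁ = 1 and σ_n = ε_n^{−1} M ∑_{ν ≥ 2, k₁+⋯+k_ν=n, k_i≥1} (ν+1) σ_{k₁}⋯σ_{k_ν}. Then σ_n ≤ η_n δ_n for all n ≥ 1,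 provided ε_n ≤ 1 for all n. -/
/-- The set of ordered compositions of `n` into at least two positive parts,
encoded as lists of positive natural numbers of length `≥ 2` summing to `n`. -/
def Comps (n : ℕ) : Set (List ℕ) :=
  {L | 2 ≤ L.length ∧ (∀ k ∈ L, 1 ≤ k) ∧ L.sum = n}

lemma length_le_sum {L : List ℕ} (h : ∀ k ∈ L, 1 ≤ k) : L.length ≤ L.sum := by
  induction L with
  | nil => simp
  | cons a t ih =>
    simp only [List.length_cons, List.sum_cons]
    have ha := h a (by simp)
    have := ih (fun k hk => h k (by simp [hk]))
    omega

lemma comps_finite (n : ℕ) : (Comps n).Finite := by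
  have h1 : Comps n ⊆ (fun l : List (Fin (n + 1)) => l.map (·.val)) ''
      {l : List (Fin (n + 1)) | l.length ≤ n} := by
    rintro L ⟨hlen, hpos, hsum⟩
    have hle : ∀ k ∈ L, k < n + 1 := by
      intro k hk
      have : k ≤ L.sum := List.le_sum_of_mem hk
      omega
    refine ⟨L.attach.map (fun k => ⟨k.1, hle k.1 k.2⟩), ?_, ?_⟩
    · simp only [Set.mem_setOf_eq, List.length_map, List.length_attach]
      have := length_le_sum hpos
      omega
    · simp [List.map_map, Function.comp]
  exact (((List.finite_length_le (Fin (n + 1)) n).image _).subset h1)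

lemma comps_mem_lt {n : ℕ} {L : List ℕ} (hL : L ∈ Comps n) : ∀ k ∈ L, k < n := by
  obtain ⟨hlen, hpos, hsum⟩ := hL
  intro k hk
  obtain ⟨s, t, rfl⟩ := List.append_of_mem hk
  have hst : 1 ≤ s.length + t.length := by
    have := hlen
    simp at this
    omega
  have hs : s.length ≤ s.sum := length_le_sum (fun x hx => hpos x (by simp [hx]))
  have ht : t.length ≤ t.sum := length_le_sum (fun x hx => hpos x (by simp [hx]))
  have : s.sum + (k + t.sum) = n := by simpa using hsum
  omega

lemma list_prod_map_mul (f g : ℕ → ℝ) (L : List ℕ) :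
    (L.map (fun k => f k * g k)).prod = (L.map f).prod * (L.map g).prod := by
  induction L with
  | nil => simp
  | cons a t ih => simp [ih]; ring

lemma list_prod_le_prod (f g : ℕ → ℝ) (L : List ℕ)
    (h0 : ∀ k ∈ L, 0 ≤ f k) (h : ∀ k ∈ L, f k ≤ g k) :
    (L.map f).prod ≤ (L.map g).prod := by
  induction L with
  | nil => simp
  | cons a t ih =>
    simp only [List.map_cons, List.prod_cons]
    have hfa : 0 ≤ f a := h0 a (by simp)
    have hga : 0 ≤ g a := hfa.trans (h a (by simp))
    have hft : 0 ≤ (t.map f).prod := by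
      apply List.prod_nonneg
      intro x hx
      simp only [List.mem_map] at hx
      obtain ⟨k, hk, rfl⟩ := hx
      exact h0 k (by simp [hk])
    exact mul_le_mul (h a (by simp)) (ih (fun k hk => h0 k (by simp [hk]))
      (fun k hk => h k (by simp [hk]))) hft hga

/-- With `η₁ = 1`, `η_n = M ∑ (ν+1) η_{k₁}⋯η_{k_ν}`, `δ₁ = 1`,
`δ_n = ε_n⁻¹ max δ_{k₁}⋯δ_{k_ν}`, `σ₁ = 1`, `σ_n = ε_n⁻¹ M ∑ (ν+1) σ_{k₁}⋯σ_{k_ν}`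
(sums and maxima over all compositions `n = k₁ + ⋯ + k_ν`, `ν ≥ 2`, `k_i ≥ 1`),
and `0 < ε_n ≤ 1`, one has `σ_n ≤ η_n δ_n` for all `n ≥ 1`. -/
theorem stmt8 (M : ℝ) (hM : 0 < M) (ε : ℕ → ℝ) (hε : ∀ n, 0 < ε n) (hε1 : ∀ n, ε n ≤ 1)
    (η δ σ : ℕ → ℝ)
    (hη1 : η 1 = 1) (hδ1 : δ 1 = 1) (hσ1 : σ 1 = 1)
    (hη : ∀ n, 2 ≤ n →
      η n = M * ∑' L : Comps n, (((L : List ℕ).length : ℝ) + 1) * ((L : List ℕ).map η).prod)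
    (hδ : ∀ n, 2 ≤ n →
      δ n = (ε n)⁻¹ * sSup ((fun L => (L.map δ).prod) '' Comps n))
    (hσ : ∀ n, 2 ≤ n →
      σ n = (ε n)⁻¹ * M *
        ∑' L : Comps n, (((L : List ℕ).length : ℝ) + 1) * ((L : List ℕ).map σ).prod) :
    ∀ n, 1 ≤ n → σ n ≤ η n * δ n := by
  suffices H : ∀ n, 1 ≤ n → 0 ≤ η n ∧ 0 ≤ δ n ∧ 0 ≤ σ n ∧ σ n ≤ η n * δ n by
    intro n hn; exact (H n hn).2.2.2
  intro n
  induction n using Nat.strong_induction_on with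
  | _ n IH =>
    intro hn
    rcases eq_or_lt_of_le hn with h1 | h2
    · simp [← h1, hη1, hδ1, hσ1]
    · have hn2 : 2 ≤ n := h2
      haveI : Finite (Comps n) := (comps_finite n).to_subtype
      -- facts about members of compositions
      have hmem : ∀ L : Comps n, ∀ k ∈ (L : List ℕ), 0 ≤ η k ∧ 0 ≤ δ k ∧ 0 ≤ σ k ∧
          σ k ≤ η k * δ k := by
        intro L k hk
        exact IH k (comps_mem_lt L.2 k hk) (L.2.2.1 k hk)
      have hηprod : ∀ L : Comps n, 0 ≤ ((L : List ℕ).map η).prod := by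
        intro L
        apply List.prod_nonneg
        intro x hx; simp only [List.mem_map] at hx; obtain ⟨k, hk, rfl⟩ := hx
        exact (hmem L k hk).1
      have hσprod : ∀ L : Comps n, 0 ≤ ((L : List ℕ).map σ).prod := by
        intro L
        apply List.prod_nonneg
        intro x hx; simp only [List.mem_map] at hx; obtain ⟨k, hk, rfl⟩ := hx
        exact (hmem L k hk).2.2.1
      have hδprod : ∀ L : Comps n, 0 ≤ ((L : List ℕ).map δ).prod := by
        intro L
        apply List.prod_nonneg
        intro x hx; simp only [List.mem_map] at hx; obtain ⟨k, hk, rfl⟩ := hx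
        exact (hmem L k hk).2.1
      set S := sSup ((fun L => (L.map δ).prod) '' Comps n) with hS
      have hbdd : BddAbove ((fun L => (L.map δ).prod) '' Comps n) :=
        ((comps_finite n).image _).bddAbove
      have hδleS : ∀ L : Comps n, ((L : List ℕ).map δ).prod ≤ S := by
        intro L
        exact le_csSup hbdd ⟨L, L.2, rfl⟩
      have hSnn : 0 ≤ S := le_trans (hδprod ⟨[1, n - 1], by
          constructor
          · simp
          · constructor
            · intro k hk; simp at hk; omega
            · simp; omega⟩) (hδleS _)
      have hεinv : 0 < (ε n)⁻¹ := inv_pos.mpr (hε n)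
      -- nonnegativity of η n, σ n, δ n
      have hηnn : 0 ≤ η n := by
        rw [hη n hn2]
        apply mul_nonneg hM.le
        apply tsum_nonneg
        intro L
        exact mul_nonneg (by positivity) (hηprod L)
      have hσnn : 0 ≤ σ n := by
        rw [hσ n hn2]
        apply mul_nonneg (mul_nonneg hεinv.le hM.le)
        apply tsum_nonneg
        intro L
        exact mul_nonneg (by positivity) (hσprod L)
      have hδnn : 0 ≤ δ n := by
        rw [hδ n hn2]
        exact mul_nonneg hεinv.le hSnn
      refine ⟨hηnn, hδnn, hσnn, ?_⟩
      -- main inequality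
      have hkey : ∀ L : Comps n,
          (((L : List ℕ).length : ℝ) + 1) * ((L : List ℕ).map σ).prod ≤
          (((L : List ℕ).length : ℝ) + 1) * ((L : List ℕ).map η).prod * S := by
        intro L
        have h1 : ((L : List ℕ).map σ).prod ≤ ((L : List ℕ).map (fun k => η k * δ k)).prod := by
          apply list_prod_le_prod
          · intro k hk; exact (hmem L k hk).2.2.1
          · intro k hk; exact (hmem L k hk).2.2.2
        have h2 : ((L : List ℕ).map (fun k => η k * δ k)).prod =
            ((L : List ℕ).map η).prod * ((L : List ℕ).map δ).prod := list_prod_map_mul _ _ _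
        have h3 : ((L : List ℕ).map η).prod * ((L : List ℕ).map δ).prod ≤
            ((L : List ℕ).map η).prod * S :=
          mul_le_mul_of_nonneg_left (hδleS L) (hηprod L)
        calc (((L : List ℕ).length : ℝ) + 1) * ((L : List ℕ).map σ).prod
            ≤ (((L : List ℕ).length : ℝ) + 1) * (((L : List ℕ).map η).prod * S) := by
              apply mul_le_mul_of_nonneg_left _ (by positivity)
              rw [← h2] at h3
              exact h1.trans h3
          _ = (((L : List ℕ).length : ℝ) + 1) * ((L : List ℕ).map η).prod * S := by ring
      have hsum : (∑' L : Comps n, (((L : List ℕ).length : ℝ) + 1) * ((L : List ℕ).map σ).prod)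
          ≤ ∑' L : Comps n, (((L : List ℕ).length : ℝ) + 1) * ((L : List ℕ).map η).prod * S :=
        Summable.tsum_le_tsum hkey (Summable.of_finite) (Summable.of_finite)
      have hsum2 : (∑' L : Comps n,
          (((L : List ℕ).length : ℝ) + 1) * ((L : List ℕ).map η).prod * S) =
          (∑' L : Comps n, (((L : List ℕ).length : ℝ) + 1) * ((L : List ℕ).map η).prod) * S :=
        tsum_mul_right
      rw [hσ n hn2, hη n hn2, hδ n hn2]
      calc (ε n)⁻¹ * M *
            (∑' L : Comps n, (((L : List ℕ).length : ℝ) + 1) * ((L : List ℕ).map σ).prod)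
          ≤ (ε n)⁻¹ * M *
            ((∑' L : Comps n, (((L : List ℕ).length : ℝ) + 1) * ((L : List ℕ).map η).prod) * S)
            := by
              apply mul_le_mul_of_nonneg_left _ (by positivity)
              rw [← hsum2]; exact hsum
        _ = M * (∑' L : Comps n, (((L : List ℕ).length : ℝ) + 1) * ((L : List ℕ).map η).prod) *
            ((ε n)⁻¹ * S) := by ring
end
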